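/- If r ≥ 3 then D_r = (∑_{j=0}^{κ_r−2} L^{j·a_r})·D_{r−1} + L^{(κ_r−1)·a_r − a_{r−1}}·(D_{r−1} − D_{r−2}). (The determinant recursion, equation (6) in the proof of Theorem 5.10, quoted there from [V1, Lemma 5.6].) -/

import Mathlib

open Finset

/-- The ring of Laurent polynomials with rational exponents in a formal variable `L`. -/
noncomputable abbrev LaurentQ := AddMonoidAlgebra ℤ ℚ

/-- The monomial `L^q`. -/
noncomputable def Lpow (q : ℚ) : LaurentQ := AddMonoidAlgebra.single q 1

/-- `K i = ∑_{j=0}^{κ_i − 1} L^{j·a_i}`. -/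
noncomputable def Kpoly (κ : ℕ → ℕ) (a : ℕ → ℚ) (i : ℕ) : LaurentQ :=
  ∑ j ∈ Finset.range (κ i), Lpow ((j : ℚ) * a i)

/-- The `(i,j)` entry (with `1`-based indices) of the non-symmetric `L`-deformation `M`
of the intersection matrix of the chain. -/
noncomputable def entry (κ : ℕ → ℕ) (a : ℕ → ℚ) (i j : ℕ) : LaurentQ :=
  if i = j then Kpoly κ a i
  else if Odd i then
    if j + 1 = i then -(Lpow (a (i + 1)))
    else if j = i + 1 then -(Lpow (a (i + 2)))
    else if j = i + 2 then Lpow (a (i + 1)) - 1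
    else 0
  else
    if j + 2 = i then Lpow (a (i - 1)) - 1
    else if j + 1 = i then -(Lpow (a (i - 2)))
    else if j = i + 1 then -(Lpow (a (i - 1)))
    else 0

/-- `D_s`: the determinant of the top-left `s×s` submatrix of `M`. -/
noncomputable def Dpoly (κ : ℕ → ℕ) (a : ℕ → ℚ) (s : ℕ) : LaurentQ :=
  Matrix.det (Matrix.of fun i j : Fin s => entry κ a ((i : ℕ) + 1) ((j : ℕ) + 1))

section DetBand

variable {R : Type*} [CommRing R]

lemma det_band (n : ℕ) (A : Matrix (Fin (n+3)) (Fin (n+3)) R) (x : R)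
    (h1 : ∀ j : Fin (n+3), (j:ℕ) < n → A (Fin.last (n+2)) j = 0)
    (h2 : ∀ j : Fin (n+3), (j:ℕ) < n → A ⟨n+1, by omega⟩ j = 0)
    (h3 : ∀ i : Fin (n+3), (i:ℕ) < n+1 → A i (Fin.last (n+2)) = 0)
    (h4 : A (Fin.last (n+2)) ⟨n, by omega⟩ + x * A ⟨n+1, by omega⟩ ⟨n, by omega⟩ = 0) :
    A.det =
      (A (Fin.last (n+2)) (Fin.last (n+2)) + x * A ⟨n+1, by omega⟩ (Fin.last (n+2))) *
        (Matrix.of fun i j : Fin (n+2) =>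
          A (Fin.castLE (by omega) i) (Fin.castLE (by omega) j)).det
      - (A (Fin.last (n+2)) ⟨n+1, by omega⟩ + x * A ⟨n+1, by omega⟩ ⟨n+1, by omega⟩) *
          A ⟨n+1, by omega⟩ (Fin.last (n+2)) *
        (Matrix.of fun i j : Fin (n+1) =>
          A (Fin.castLE (by omega) i) (Fin.castLE (by omega) j)).det := by
  set p : Fin (n+3) := ⟨n+1, by omega⟩ with hp
  have hlp : Fin.last (n+2) ≠ p := by
    simp [Fin.ext_iff, hp, Fin.last]
  set B := A.updateRow (Fin.last (n+2)) (A (Fin.last (n+2)) + x • A p) with hBdef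
  have hdet : B.det = A.det := Matrix.det_updateRow_add_smul_self A hlp x
  have hBlast : ∀ j, B (Fin.last (n+2)) j = A (Fin.last (n+2)) j + x * A p j := by
    intro j
    simp [hBdef, Matrix.updateRow_self]
  have hBrow : ∀ (i : Fin (n+2)) (j : Fin (n+3)),
      B (Fin.castSucc i) j = A (Fin.castSucc i) j := by
    intro i j
    rw [hBdef, Matrix.updateRow_ne (Fin.castSucc_lt_last i).ne]
  rw [← hdet, Matrix.det_succ_row B (Fin.last (n+2))]
  rw [Finset.sum_eq_add_of_mem p (Fin.last (n+2)) (mem_univ _) (mem_univ _) hlp.symm ?_]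
  · simp only [Fin.succAbove_last]
    have hsign1 : (-1 : R) ^ ((Fin.last (n+2) : ℕ) + (p : ℕ)) = -1 := by
      have : (Fin.last (n+2) : ℕ) + (p : ℕ) = 2*n + 3 := by
        simp [hp, Fin.last]; omega
      rw [this]
      exact Odd.neg_one_pow ⟨n+1, by ring⟩
    have hsign2 : (-1 : R) ^ ((Fin.last (n+2) : ℕ) + (Fin.last (n+2) : ℕ)) = 1 :=
      Even.neg_one_pow ⟨(n+2), rfl⟩
    rw [hsign1, hsign2, hBlast, hBlast]
    have hm2 : B.submatrix Fin.castSucc Fin.castSucc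
        = Matrix.of fun i j : Fin (n+2) =>
            A (Fin.castLE (by omega) i) (Fin.castLE (by omega) j) := by
      ext i j
      rw [Matrix.submatrix_apply, hBrow]
      have hr : Fin.castSucc i = Fin.castLE (by omega : n+2 ≤ n+3) i := Fin.ext (by simp)
      have hc : Fin.castSucc j = Fin.castLE (by omega : n+2 ≤ n+3) j := Fin.ext (by simp)
      rw [hr, hc]
      rfl
    have hm1 : (B.submatrix Fin.castSucc p.succAbove).det
        = A p (Fin.last (n+2)) *
          (Matrix.of fun i j : Fin (n+1) =>
            A (Fin.castLE (by omega) i) (Fin.castLE (by omega) j)).det := by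
      have hC : B.submatrix Fin.castSucc p.succAbove
          = A.submatrix Fin.castSucc p.succAbove := by
        ext i j
        rw [Matrix.submatrix_apply, hBrow, Matrix.submatrix_apply]
      rw [hC, Matrix.det_succ_column (A.submatrix Fin.castSucc p.succAbove) (Fin.last (n+1))]
      simp only [Fin.succAbove_last]
      have hpl : p.succAbove (Fin.last (n+1)) = Fin.last (n+2) := by
        rw [Fin.succAbove_of_le_castSucc]
        · exact Fin.ext (by simp)
        · simp [hp, Fin.le_def, Fin.last]
      rw [Finset.sum_eq_single (Fin.last (n+1)) ?_ (by simp)]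
      · have hsign3 : (-1 : R) ^ ((Fin.last (n+1) : ℕ) + (Fin.last (n+1) : ℕ)) = 1 :=
          Even.neg_one_pow ⟨(n+1), rfl⟩
        rw [hsign3, one_mul, Matrix.submatrix_apply, hpl]
        have hrow : Fin.castSucc (Fin.last (n+1)) = p := Fin.ext (by simp [hp])
        rw [hrow, Fin.succAbove_last]
        have hmin : (A.submatrix Fin.castSucc p.succAbove).submatrix
            Fin.castSucc Fin.castSucc
            = Matrix.of fun i j : Fin (n+1) =>
              A (Fin.castLE (by omega) i) (Fin.castLE (by omega) j) := by
          ext i j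
          simp only [Matrix.submatrix_apply, Matrix.of_apply]
          have hcnd : Fin.castSucc (Fin.castSucc j) < p := by
            rw [Fin.lt_def]
            simp [hp]
            omega
          rw [Fin.succAbove_of_castSucc_lt _ _ hcnd]
          have hr : Fin.castSucc (Fin.castSucc i) = Fin.castLE (by omega : n+1 ≤ n+3) i :=
            Fin.ext (by simp)
          have hc : Fin.castSucc (Fin.castSucc j) = Fin.castLE (by omega : n+1 ≤ n+3) j :=
            Fin.ext (by simp)
          rw [hr, hc]
        rw [hmin]
      · intro i _ hi
        have hiv : (i : ℕ) < n + 1 := by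
          have h1 := i.isLt
          have h2 : (i : ℕ) ≠ n + 1 := fun h => hi (Fin.ext (by simp [Fin.last, h]))
          omega
        have : (A.submatrix Fin.castSucc p.succAbove) i (Fin.last (n+1)) = 0 := by
          rw [Matrix.submatrix_apply, hpl]
          exact h3 _ (by simpa using hiv)
        rw [this, mul_zero, zero_mul]
    rw [hm1, hm2]
    ring
  · intro c _ hc
    have h1c : (c : ℕ) ≠ n + 1 := fun h => hc.1 (Fin.ext (show (c : ℕ) = n + 1 from h))
    have h2c : (c : ℕ) ≠ n + 2 := fun h => hc.2 (Fin.ext (show (c : ℕ) = n + 2 from h))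
    have hcv : (c : ℕ) < n + 1 := by
      have : (c : ℕ) < n + 3 := c.isLt
      omega
    have hz : B (Fin.last (n+2)) c = 0 := by
      rw [hBlast]
      rcases Nat.lt_or_ge (c : ℕ) n with h | h
      · rw [h1 _ h, h2 _ h]; ring
      · have : c = (⟨n, by omega⟩ : Fin (n+3)) := Fin.ext (show (c : ℕ) = n by omega)
        rw [this]
        exact h4
    rw [hz, mul_zero, zero_mul]

end DetBand

lemma Lpow_mul_Lpow (p q : ℚ) : Lpow p * Lpow q = Lpow (p + q) := by
  simp [Lpow, AddMonoidAlgebra.single_mul_single]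

lemma Lpow_zero_eq_one : Lpow 0 = 1 := rfl

lemma Lpow_geom (b : ℚ) (k : ℕ) :
    (Lpow b - 1) * ∑ j ∈ Finset.range k, Lpow ((j : ℚ) * b) = Lpow ((k : ℚ) * b) - 1 := by
  induction k with
  | zero => simp [Lpow_zero_eq_one]
  | succ k ih =>
    rw [Finset.sum_range_succ, mul_add, ih, sub_mul, one_mul, Lpow_mul_Lpow]
    have h1 : b + (k : ℚ) * b = ((k : ℕ) + 1 : ℚ) * b := by ring
    have h2 : (((k : ℕ) + 1 : ℕ) : ℚ) = ((k : ℕ) : ℚ) + 1 := by push_cast; ring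
    rw [h1, h2]
    ring

set_option maxHeartbeats 1000000 in
/-- Equation (6) in the proof of Theorem 5.10 (from [V1, Lemma 5.6]): for `r ≥ 3`,
`D_r = (∑_{j=0}^{κ_r−2} L^{j·a_r})·D_{r−1} + L^{(κ_r−1)·a_r − a_{r−1}}·(D_{r−1} − D_{r−2})`. -/
theorem Dpoly_recursion (r : ℕ) (hr : 3 ≤ r) (a : ℕ → ℚ) (κ : ℕ → ℕ)
    (hκ : ∀ i, 1 ≤ i → i ≤ r → 2 ≤ κ i)
    (hchain : ∀ i, 1 ≤ i → i ≤ r → (κ i : ℚ) * a i = a (i - 1) + a (i + 1)) :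
    Dpoly κ a r =
      (∑ j ∈ Finset.range (κ r - 1), Lpow ((j : ℚ) * a r)) * Dpoly κ a (r - 1)
        + Lpow (((κ r : ℚ) - 1) * a r - a (r - 1)) * (Dpoly κ a (r - 1) - Dpoly κ a (r - 2)) := by
  obtain ⟨n, rfl⟩ : ∃ n, r = n + 3 := ⟨r - 3, by omega⟩
  have hκ3 : 2 ≤ κ (n+3) := hκ _ (by omega) le_rfl
  have hκ2 : 2 ≤ κ (n+2) := hκ _ (by omega) (by omega)
  have hch3 : (κ (n+3) : ℚ) * a (n+3) = a (n+2) + a (n+4) := by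
    have h := hchain (n+3) (by omega) le_rfl
    have e : n + 3 - 1 = n + 2 := by omega
    rw [e] at h
    exact h
  have hch2 : (κ (n+2) : ℚ) * a (n+2) = a (n+1) + a (n+3) := by
    have h := hchain (n+2) (by omega) (by omega)
    have e : n + 2 - 1 = n + 1 := by omega
    rw [e] at h
    exact h
  set x : LaurentQ := Lpow (a (n+2) - a (n+3)) - Lpow (-(a (n+3))) with hxdef
  have hx3 : x * Lpow (a (n+3)) = Lpow (a (n+2)) - 1 := by
    rw [hxdef, sub_mul, Lpow_mul_Lpow, Lpow_mul_Lpow]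
    have e1 : a (n+2) - a (n+3) + a (n+3) = a (n+2) := by ring
    have e2 : -(a (n+3)) + a (n+3) = 0 := by ring
    rw [e1, e2, Lpow_zero_eq_one]
  -- the key determinant identity from the row/column operation
  have key : Dpoly κ a (n+3)
      = (Kpoly κ a (n+3) + x * (-(Lpow (a (n+4))))) * Dpoly κ a (n+2)
        - ((-(Lpow (a (n+1)))) + x * Kpoly κ a (n+2)) * (-(Lpow (a (n+4))))
            * Dpoly κ a (n+1) := by
    rcases Nat.even_or_odd (n+3) with hpar | hpar
    · -- even case : row operation on the matrix itself
      have he2 : (n+3) % 2 = 0 := Nat.even_iff.mp hpar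
      set A : Matrix (Fin (n+3)) (Fin (n+3)) LaurentQ :=
        Matrix.of fun i j : Fin (n+3) => entry κ a ((i : ℕ) + 1) ((j : ℕ) + 1) with hA
      have h1' : ∀ j : Fin (n+3), (j:ℕ) < n → A (Fin.last (n+2)) j = 0 := by
        intro j hj
        show entry κ a (n+3) ((j:ℕ)+1) = 0
        simp only [entry, Nat.odd_iff]
        split_ifs <;> first | (exfalso; omega) | rfl
      have h2' : ∀ j : Fin (n+3), (j:ℕ) < n → A ⟨n+1, by omega⟩ j = 0 := by
        intro j hj
        show entry κ a (n+2) ((j:ℕ)+1) = 0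
        simp only [entry, Nat.odd_iff]
        split_ifs <;> first | (exfalso; omega) | rfl
      have h3' : ∀ i : Fin (n+3), (i:ℕ) < n+1 → A i (Fin.last (n+2)) = 0 := by
        intro i hi
        show entry κ a ((i:ℕ)+1) (n+3) = 0
        simp only [entry, Nat.odd_iff]
        split_ifs <;> first | (exfalso; omega) | rfl
      have e1 : A (Fin.last (n+2)) (⟨n, by omega⟩ : Fin (n+3)) = Lpow (a (n+2)) - 1 := by
        show entry κ a (n+3) (n+1) = _
        simp only [entry, Nat.odd_iff]
        split_ifs <;> first | (exfalso; omega) | rfl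
      have e2 : A (⟨n+1, by omega⟩ : Fin (n+3)) (⟨n, by omega⟩ : Fin (n+3))
          = -(Lpow (a (n+3))) := by
        show entry κ a (n+2) (n+1) = _
        simp only [entry, Nat.odd_iff]
        split_ifs <;> first | (exfalso; omega) | rfl
      have e3 : A (Fin.last (n+2)) (Fin.last (n+2)) = Kpoly κ a (n+3) := by
        show entry κ a (n+3) (n+3) = _
        simp only [entry, Nat.odd_iff]
        split_ifs <;> first | (exfalso; omega) | rfl
      have e4 : A (⟨n+1, by omega⟩ : Fin (n+3)) (Fin.last (n+2)) = -(Lpow (a (n+4))) := by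
        show entry κ a (n+2) (n+3) = _
        simp only [entry, Nat.odd_iff]
        split_ifs <;> first | (exfalso; omega) | rfl
      have e5 : A (Fin.last (n+2)) (⟨n+1, by omega⟩ : Fin (n+3)) = -(Lpow (a (n+1))) := by
        show entry κ a (n+3) (n+2) = _
        simp only [entry, Nat.odd_iff]
        split_ifs <;> first | (exfalso; omega) | rfl
      have e6 : A (⟨n+1, by omega⟩ : Fin (n+3)) (⟨n+1, by omega⟩ : Fin (n+3))
          = Kpoly κ a (n+2) := by
        show entry κ a (n+2) (n+2) = _
        simp only [entry, Nat.odd_iff]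
        split_ifs <;> first | (exfalso; omega) | rfl
      have h4' : A (Fin.last (n+2)) ⟨n, by omega⟩ + x * A ⟨n+1, by omega⟩ ⟨n, by omega⟩ = 0 := by
        rw [e1, e2, mul_neg, hx3]
        ring
      have hD : Dpoly κ a (n+3) = A.det := rfl
      rw [hD, det_band n A x h1' h2' h3' h4', e3, e4, e5, e6]
      rfl
    · -- odd case : work with the transpose
      have ho2 : (n+3) % 2 = 1 := Nat.odd_iff.mp hpar
      set A : Matrix (Fin (n+3)) (Fin (n+3)) LaurentQ :=
        Matrix.of fun i j : Fin (n+3) => entry κ a ((j : ℕ) + 1) ((i : ℕ) + 1) with hA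
      have h1' : ∀ j : Fin (n+3), (j:ℕ) < n → A (Fin.last (n+2)) j = 0 := by
        intro j hj
        show entry κ a ((j:ℕ)+1) (n+3) = 0
        simp only [entry, Nat.odd_iff]
        split_ifs <;> first | (exfalso; omega) | rfl
      have h2' : ∀ j : Fin (n+3), (j:ℕ) < n → A ⟨n+1, by omega⟩ j = 0 := by
        intro j hj
        show entry κ a ((j:ℕ)+1) (n+2) = 0
        simp only [entry, Nat.odd_iff]
        split_ifs <;> first | (exfalso; omega) | rfl
      have h3' : ∀ i : Fin (n+3), (i:ℕ) < n+1 → A i (Fin.last (n+2)) = 0 := by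
        intro i hi
        show entry κ a (n+3) ((i:ℕ)+1) = 0
        simp only [entry, Nat.odd_iff]
        split_ifs <;> first | (exfalso; omega) | rfl
      have e1 : A (Fin.last (n+2)) (⟨n, by omega⟩ : Fin (n+3)) = Lpow (a (n+2)) - 1 := by
        show entry κ a (n+1) (n+3) = _
        simp only [entry, Nat.odd_iff]
        split_ifs <;> first | (exfalso; omega) | rfl
      have e2 : A (⟨n+1, by omega⟩ : Fin (n+3)) (⟨n, by omega⟩ : Fin (n+3))
          = -(Lpow (a (n+3))) := by
        show entry κ a (n+1) (n+2) = _
        simp only [entry, Nat.odd_iff]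
        split_ifs <;> first | (exfalso; omega) | rfl
      have e3 : A (Fin.last (n+2)) (Fin.last (n+2)) = Kpoly κ a (n+3) := by
        show entry κ a (n+3) (n+3) = _
        simp only [entry, Nat.odd_iff]
        split_ifs <;> first | (exfalso; omega) | rfl
      have e4 : A (⟨n+1, by omega⟩ : Fin (n+3)) (Fin.last (n+2)) = -(Lpow (a (n+4))) := by
        show entry κ a (n+3) (n+2) = _
        simp only [entry, Nat.odd_iff]
        split_ifs <;> first | (exfalso; omega) | rfl
      have e5 : A (Fin.last (n+2)) (⟨n+1, by omega⟩ : Fin (n+3)) = -(Lpow (a (n+1))) := by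
        show entry κ a (n+2) (n+3) = _
        simp only [entry, Nat.odd_iff]
        split_ifs <;> first | (exfalso; omega) | rfl
      have e6 : A (⟨n+1, by omega⟩ : Fin (n+3)) (⟨n+1, by omega⟩ : Fin (n+3))
          = Kpoly κ a (n+2) := by
        show entry κ a (n+2) (n+2) = _
        simp only [entry, Nat.odd_iff]
        split_ifs <;> first | (exfalso; omega) | rfl
      have h4' : A (Fin.last (n+2)) ⟨n, by omega⟩ + x * A ⟨n+1, by omega⟩ ⟨n, by omega⟩ = 0 := by
        rw [e1, e2, mul_neg, hx3]
        ring
      have hD : Dpoly κ a (n+3) = A.det :=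
        (Matrix.det_transpose
          (Matrix.of fun i j : Fin (n+3) => entry κ a ((i : ℕ) + 1) ((j : ℕ) + 1))).symm
      rw [hD, det_band n A x h1' h2' h3' h4', e3, e4, e5, e6]
      have m2 : (Matrix.of fun i j : Fin (n+2) =>
          A (Fin.castLE (by omega) i) (Fin.castLE (by omega) j)).det = Dpoly κ a (n+2) :=
        Matrix.det_transpose
          (Matrix.of fun i j : Fin (n+2) => entry κ a ((i : ℕ) + 1) ((j : ℕ) + 1))
      have m1 : (Matrix.of fun i j : Fin (n+1) =>
          A (Fin.castLE (by omega) i) (Fin.castLE (by omega) j)).det = Dpoly κ a (n+1) :=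
        Matrix.det_transpose
          (Matrix.of fun i j : Fin (n+1) => entry κ a ((i : ℕ) + 1) ((j : ℕ) + 1))
      rw [m2, m1]
  -- now the algebra
  have e1 : n + 3 - 1 = n + 2 := by omega
  have e2 : n + 3 - 2 = n + 1 := by omega
  rw [e1, e2, key]
  have hxfac : x = Lpow (-(a (n+3))) * (Lpow (a (n+2)) - 1) := by
    rw [mul_sub, mul_one, Lpow_mul_Lpow]
    have e : -(a (n+3)) + a (n+2) = a (n+2) - a (n+3) := by ring
    rw [e, hxdef]
  have hgeo : (Lpow (a (n+2)) - 1) * Kpoly κ a (n+2) = Lpow ((κ (n+2) : ℚ) * a (n+2)) - 1 :=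
    Lpow_geom (a (n+2)) (κ (n+2))
  have hxK : x * Kpoly κ a (n+2) = Lpow (a (n+1)) - Lpow (-(a (n+3))) := by
    rw [hxfac, mul_assoc, hgeo, hch2, mul_sub, mul_one, Lpow_mul_Lpow]
    have e : -(a (n+3)) + (a (n+1) + a (n+3)) = a (n+1) := by ring
    rw [e]
  have hexp : -(a (n+3)) + a (n+4) = ((κ (n+3) : ℚ) - 1) * a (n+3) - a (n+2) := by
    linear_combination -hch3
  have hB : ((-(Lpow (a (n+1)))) + x * Kpoly κ a (n+2)) * (-(Lpow (a (n+4))))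
      = Lpow (((κ (n+3) : ℚ) - 1) * a (n+3) - a (n+2)) := by
    rw [hxK]
    have e : (-(Lpow (a (n+1))) + (Lpow (a (n+1)) - Lpow (-(a (n+3)))))
        = -(Lpow (-(a (n+3)))) := by ring
    rw [e, neg_mul_neg, Lpow_mul_Lpow, hexp]
  have hfact1 : Kpoly κ a (n+3)
      = (∑ j ∈ Finset.range (κ (n+3) - 1), Lpow ((j : ℚ) * a (n+3)))
        + Lpow (((κ (n+3) : ℚ) - 1) * a (n+3)) := by
    have hc : ((κ (n+3) - 1 : ℕ) : ℚ) = (κ (n+3) : ℚ) - 1 := by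
      rw [Nat.cast_sub (by omega)]
      norm_num
    have hk : (κ (n+3) - 1) + 1 = κ (n+3) := by omega
    have hs := Finset.sum_range_succ (fun j : ℕ => Lpow ((j : ℚ) * a (n+3))) (κ (n+3) - 1)
    rw [hk] at hs
    rw [Kpoly, hs, hc]
  have hxw : x * (-(Lpow (a (n+4))))
      = Lpow (((κ (n+3) : ℚ) - 1) * a (n+3) - a (n+2))
        - Lpow (((κ (n+3) : ℚ) - 1) * a (n+3)) := by
    rw [hxdef, sub_mul, mul_neg, mul_neg, Lpow_mul_Lpow, Lpow_mul_Lpow]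
    have ea : a (n+2) - a (n+3) + a (n+4) = ((κ (n+3) : ℚ) - 1) * a (n+3) := by
      linear_combination -hch3
    rw [ea, hexp]
    ring
  have hAco : Kpoly κ a (n+3) + x * (-(Lpow (a (n+4))))
      = (∑ j ∈ Finset.range (κ (n+3) - 1), Lpow ((j : ℚ) * a (n+3)))
        + Lpow (((κ (n+3) : ℚ) - 1) * a (n+3) - a (n+2)) := by
    rw [hfact1, hxw]
    ring
  rw [hAco, hB]
  ring
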